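/- arXiv:1510.07189 — 5 statements merged into one kernel-verified Lean document; each statement's English description precedes it below -/
import Mathlib

section
/- Let n ∈ ℕ and d, p ∈ ℝⁿ with p ≠ 0. Then: (a) ⟨d−zp, d−zp⟩ = ‖p‖²·(w−z)·(w̄−z) for all z ∈ ℂ; (b) for every z ∈ U_dp one has ⟨d−zp, d−zp⟩ ∉ ℝ_{≤0}; (c) the function n_dp : U_dp → ℂ defined by n_dp(z) := √(⟨d−zp, d−zp⟩) = ‖p‖·√((w−z)(w̄−z)) is well-defined, holomorphic on U_dp, and takes values in the right half-plane ℂ₊ := {z ∈ ℂ : Re z > 0}. -/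
/-!
Completing the square gives `⟨d - z p, d - z p⟩ = ‖p‖² (w - z)(w̄ - z)`; that `w_i` is real
is Cauchy–Schwarz. For `z = x + i y` the product `(w - z)(w̄ - z)` has real part
`(w_r - x)² + w_i² - y²` and imaginary part `-2 (w_r - x) y`, so it stays off `ℝ_{≤0}` as long
as `z` avoids the two slits `{w_r + i y : |y| ≥ w_i}`. On the slit plane `csqrt` coincides with
the principal power `z ^ (1/2)`, since both square to `z` and neither has negative real part;
holomorphy follows.
-/

open Complex Set

/-- The principal branch of the complex square root,
`√z := √|z| · (z+|z|)/|z+|z||`. -/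
noncomputable def csqrt (z : ℂ) : ℂ :=
  (Real.sqrt ‖z‖ : ℂ) *
    ((z + (‖z‖ : ℂ)) / ((‖z + (‖z‖ : ℂ)‖ : ℝ) : ℂ))

/-- The Euclidean norm on `ℝⁿ`. -/
noncomputable def euclNorm {n : ℕ} (x : Fin n → ℝ) : ℝ := Real.sqrt (∑ j, (x j) ^ 2)

open ComplexConjugate

namespace Complex

lemma re_add_norm_pos {z : ℂ} (hz : z ∈ slitPlane) : 0 < z.re + ‖z‖ := by
  rcases mem_slitPlane_iff.1 hz with h | h
  · linarith [norm_nonneg z]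
  · linarith [neg_abs_le z.re, abs_re_lt_norm.2 h]

lemma add_norm_ne_zero {z : ℂ} (hz : z ∈ slitPlane) : z + ‖z‖ ≠ 0 := fun h => by
  have := congrArg re h
  simp only [add_re, ofReal_re, zero_re] at this
  exact (re_add_norm_pos hz).ne' this

lemma ofReal_mul_mem_slitPlane {r : ℝ} (hr : 0 < r) {z : ℂ} (hz : z ∈ slitPlane) :
    (r : ℂ) * z ∈ slitPlane := by
  rw [mem_slitPlane_iff] at hz ⊢
  rw [re_ofReal_mul, im_ofReal_mul]
  rcases hz with h | h
  · exact Or.inl (mul_pos hr h)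
  · exact Or.inr (mul_ne_zero hr.ne' h)

lemma sub_mul_conj_sub (w z : ℂ) :
    (w - z) * (conj w - z) = normSq w - 2 * w.re * z + z ^ 2 := by
  have := add_conj w
  push_cast at this
  rw [← mul_conj]
  linear_combination (-z) * this

lemma sub_mul_conj_sub_mem_slitPlane {w z : ℂ} (h : ¬(z.re = w.re ∧ |w.im| ≤ |z.im|)) :
    (w - z) * (conj w - z) ∈ slitPlane := by
  have hre : ((w - z) * (conj w - z)).re = (w.re - z.re) ^ 2 + w.im ^ 2 - z.im ^ 2 := by
    simp only [mul_re, sub_re, sub_im, conj_re, conj_im]; ring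
  have him : ((w - z) * (conj w - z)).im = -2 * (w.re - z.re) * z.im := by
    simp only [mul_im, sub_re, sub_im, conj_re, conj_im]; ring
  rw [mem_slitPlane_iff, hre, him]
  by_cases hx : z.re = w.re
  · have : z.im ^ 2 < w.im ^ 2 := sq_lt_sq.2 (lt_of_not_ge (h ⟨hx, ·⟩))
    left; nlinarith
  have hx' : w.re - z.re ≠ 0 := sub_ne_zero.2 (Ne.symm hx)
  by_cases hy : z.im = 0
  · left; rw [hy]; nlinarith [pow_pos (abs_pos.2 hx') 2, sq_abs (w.re - z.re), sq_nonneg w.im]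
  · right; exact mul_ne_zero (mul_ne_zero (by norm_num) hx') hy

lemma norm_mul_add_norm_sq (z : ℂ) :
    (‖z‖ : ℂ) * (z + ‖z‖) ^ 2 = z * (‖z + ‖z‖‖ : ℂ) ^ 2 := by
  have h1 := mul_conj' z
  have h2 := mul_conj' (z + ‖z‖)
  rw [map_add, conj_ofReal] at h2
  linear_combination (-(z + ‖z‖)) * h1 + z * h2

end Complex

lemma csqrt_mul_self {z : ℂ} (hz : z ∈ slitPlane) : csqrt z * csqrt z = z := by
  have hs : (‖z + ‖z‖‖ : ℂ) ≠ 0 := ofReal_ne_zero.2 (norm_ne_zero_iff.2 (add_norm_ne_zero hz))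
  have hsqrt : (√‖z‖ : ℂ) * √‖z‖ = ‖z‖ := by
    rw [← ofReal_mul, Real.mul_self_sqrt (norm_nonneg z)]
  rw [csqrt]
  field_simp
  linear_combination (z + ‖z‖) ^ 2 * hsqrt + norm_mul_add_norm_sq z

lemma re_csqrt_pos {z : ℂ} (hz : z ∈ slitPlane) : 0 < (csqrt z).re := by
  have hz0 : 0 < ‖z‖ := norm_pos_iff.2 (slitPlane_ne_zero hz)
  have hs : 0 < ‖z + ‖z‖‖ := norm_pos_iff.2 (add_norm_ne_zero hz)
  have hre : 0 < (z + ‖z‖).re := by simpa using re_add_norm_pos hz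
  rw [csqrt, re_ofReal_mul, div_ofReal_re]
  positivity

lemma csqrt_eq_cpow {z : ℂ} (hz : z ∈ slitPlane) : csqrt z = z ^ (2⁻¹ : ℂ) := by
  have h : csqrt z * csqrt z = z ^ (2⁻¹ : ℂ) * z ^ (2⁻¹ : ℂ) := by
    rw [csqrt_mul_self hz, ← sq, cpow_ofNat_inv_pow]
  refine (mul_self_eq_mul_self_iff.1 h).resolve_right fun hneg => ?_
  have := re_csqrt_pos hz
  rw [hneg, neg_re, cpow_inv_two_re] at this
  linarith [Real.sqrt_nonneg ((‖z‖ + z.re) / 2)]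

lemma differentiableOn_csqrt : DifferentiableOn ℂ csqrt slitPlane :=
  DifferentiableOn.congr (f := (· ^ (2⁻¹ : ℂ)))
    (fun _ hz => (differentiableAt_id.cpow_const hz).differentiableWithinAt)
    fun _ hz => csqrt_eq_cpow hz

lemma csqrt_ofReal_mul {r : ℝ} (hr : 0 ≤ r) (z : ℂ) : csqrt (r * z) = √r * csqrt z := by
  rcases hr.eq_or_lt with rfl | hr
  · simp [csqrt]
  have hn : ‖(r : ℂ) * z‖ = r * ‖z‖ := by rw [norm_mul, norm_real, Real.norm_of_nonneg hr.le]
  have hs : (r : ℂ) * z + ((r * ‖z‖ : ℝ) : ℂ) = r * (z + ‖z‖) := by push_cast; ring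
  rw [csqrt, csqrt, hn, hs, norm_mul, norm_real, Real.norm_of_nonneg hr.le, Real.sqrt_mul hr.le]
  push_cast
  rw [mul_div_mul_left _ _ (ofReal_ne_zero.2 hr.ne')]
  ring

section euclNorm

variable {n : ℕ}

lemma euclNorm_sq (x : Fin n → ℝ) : euclNorm x ^ 2 = ∑ j, x j ^ 2 :=
  Real.sq_sqrt (Finset.sum_nonneg fun _ _ => sq_nonneg _)

lemma euclNorm_pos {x : Fin n → ℝ} (hx : x ≠ 0) : 0 < euclNorm x := by
  obtain ⟨j, hj⟩ : ∃ j, x j ≠ 0 := Function.ne_iff.1 hx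
  exact Real.sqrt_pos.2 <|
    Finset.sum_pos' (fun _ _ => sq_nonneg _) ⟨j, Finset.mem_univ j, sq_pos_of_ne_zero hj⟩

lemma sq_sum_mul_le_euclNorm_sq_mul (d p : Fin n → ℝ) :
    (∑ j, d j * p j) ^ 2 ≤ euclNorm d ^ 2 * euclNorm p ^ 2 := by
  rw [euclNorm_sq, euclNorm_sq]
  exact Finset.sum_mul_sq_le_sq_mul_sq _ _ _

lemma sum_sub_mul_mul_self (d p : Fin n → ℝ) (z : ℂ) :
    ∑ j, ((d j : ℂ) - z * p j) * ((d j : ℂ) - z * p j) =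
      ((euclNorm d ^ 2 : ℝ) : ℂ) - 2 * ((∑ j, d j * p j : ℝ) : ℂ) * z +
        ((euclNorm p ^ 2 : ℝ) : ℂ) * z ^ 2 := by
  rw [euclNorm_sq, euclNorm_sq]
  push_cast
  simp only [Finset.mul_sum, Finset.sum_mul, ← Finset.sum_sub_distrib, ← Finset.sum_add_distrib]
  exact Finset.sum_congr rfl fun j _ => by ring

lemma sum_sub_mul_mul_self_eq_mul_sub_mul_conj_sub {d p : Fin n → ℝ} (hp : p ≠ 0) {w : ℂ}
    (hre : w.re = (∑ j, d j * p j) / euclNorm p ^ 2)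
    (him : w.im = √(euclNorm d ^ 2 / euclNorm p ^ 2 - w.re ^ 2)) (z : ℂ) :
    ∑ j, ((d j : ℂ) - z * p j) * ((d j : ℂ) - z * p j) =
      ((euclNorm p : ℝ) : ℂ) ^ 2 * (w - z) * (conj w - z) := by
  have hP := euclNorm_pos hp
  have hdisc : 0 ≤ euclNorm d ^ 2 / euclNorm p ^ 2 - w.re ^ 2 := by
    rw [sub_nonneg, hre, div_pow, div_le_div_iff₀ (by positivity) (by positivity)]
    nlinarith [sq_sum_mul_le_euclNorm_sq_mul d p]
  have hcenter : euclNorm p ^ 2 * w.re = ∑ j, d j * p j := by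
    rw [hre]; field_simp
  have hnormSq : euclNorm p ^ 2 * normSq w = euclNorm d ^ 2 := by
    rw [normSq_apply, ← sq, ← sq, him, Real.sq_sqrt hdisc]
    field_simp
    ring
  rw [sum_sub_mul_mul_self, mul_assoc (_ ^ 2), sub_mul_conj_sub, ← hcenter, ← hnormSq]
  push_cast
  ring

end euclNorm

/-- factorization of the bilinear form `⟨d−zp, d−zp⟩`, avoidance of `ℝ_{≤0}`
on `U_dp`, and well-definedness, holomorphy and range of the extension
`n_dp(z) = √⟨d−zp, d−zp⟩ = ‖p‖·√((w−z)(w̄−z))` of the Euclidean norm. -/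
theorem stmt0 (n : ℕ) (d p : Fin n → ℝ) (hp : p ≠ 0)
    (wr : ℝ) (hwr : wr = (∑ j, d j * p j) / (euclNorm p) ^ 2)
    (wi : ℝ) (hwi : wi = Real.sqrt ((euclNorm d) ^ 2 / (euclNorm p) ^ 2 - wr ^ 2))
    (w : ℂ) (hw : w = (wr : ℂ) + (wi : ℂ) * Complex.I)
    (U : Set ℂ) (hU : U = {z : ℂ | ¬ (z.re = wr ∧ wi ≤ |z.im|)})
    (S : ℂ → ℂ)
    (hS : S = fun z => ∑ j, ((d j : ℂ) - z * (p j : ℂ)) * ((d j : ℂ) - z * (p j : ℂ)))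
    (ndp : ℂ → ℂ) (hndp : ndp = fun z => csqrt (S z)) :
    (∀ z : ℂ, S z = ((euclNorm p : ℝ) : ℂ) ^ 2 * (w - z) * ((starRingEnd ℂ) w - z)) ∧
    (∀ z ∈ U, ¬ ∃ r : ℝ, r ≤ 0 ∧ S z = (r : ℂ)) ∧
    (∀ z ∈ U, ndp z = ((euclNorm p : ℝ) : ℂ) * csqrt ((w - z) * ((starRingEnd ℂ) w - z))) ∧
    DifferentiableOn ℂ ndp U ∧
    (∀ z ∈ U, 0 < (ndp z).re) := by
  have hP := euclNorm_pos hp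
  obtain ⟨hwre, hwim⟩ : w.re = wr ∧ w.im = wi := by simp [hw]
  have hfactor : ∀ z, S z = ((euclNorm p : ℝ) : ℂ) ^ 2 * (w - z) * (conj w - z) := fun z => by
    rw [hS]
    exact sum_sub_mul_mul_self_eq_mul_sub_mul_conj_sub hp (hwre ▸ hwr) (hwre ▸ hwim ▸ hwi) z
  have hmem : ∀ z ∈ U, S z ∈ slitPlane := by
    intro z hz
    rw [hU] at hz
    have hwz : ¬(z.re = w.re ∧ |w.im| ≤ |z.im|) := by
      rwa [hwre, hwim, abs_of_nonneg (hwi ▸ Real.sqrt_nonneg _)]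
    rw [hfactor, mul_assoc, ← ofReal_pow]
    exact ofReal_mul_mem_slitPlane (by positivity) (sub_mul_conj_sub_mem_slitPlane hwz)
  refine ⟨hfactor, ?_, ?_, ?_, ?_⟩
  · rintro z hz ⟨r, hr, hSz⟩
    have := hmem z hz
    rw [hSz, ofReal_mem_slitPlane] at this
    linarith
  · intro z _
    rw [hndp]
    dsimp only
    rw [hfactor, mul_assoc, ← ofReal_pow, csqrt_ofReal_mul (by positivity), Real.sqrt_sq hP.le]
  · have hSdiff : Differentiable ℂ S := by rw [hS]; fun_prop
    rw [hndp]
    exact differentiableOn_csqrt.comp hSdiff.differentiableOn fun z hz => hmem z hz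
  · intro z hz
    rw [hndp]
    exact re_csqrt_pos (hmem z hz)
end

section
/- Let n ∈ ℕ and d, p ∈ ℝⁿ with p ≠ 0. Then for every real t one has |w − t| = ‖d − tp‖ / ‖p‖. -/
open Complex Set

lemma euclNorm_eq_norm_toLp {n : ℕ} (x : Fin n → ℝ) : euclNorm x = ‖WithLp.toLp 2 x‖ := by
  simp [euclNorm, EuclideanSpace.norm_eq]

lemma sum_mul_eq_inner_toLp {n : ℕ} (x y : Fin n → ℝ) :
    ∑ j, x j * y j = inner ℝ (WithLp.toLp 2 x) (WithLp.toLp 2 y) := by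
  simp [PiLp.inner_apply, mul_comm]

section InnerProductSpace

variable {E : Type*} [NormedAddCommGroup E] [InnerProductSpace ℝ E]

lemma sq_real_inner_div_sq_norm_le (d p : E) :
    (inner ℝ d p / ‖p‖ ^ 2) ^ 2 ≤ ‖d‖ ^ 2 / ‖p‖ ^ 2 := by
  rcases eq_or_ne p 0 with rfl | hp
  · simp
  have hp' : 0 < ‖p‖ ^ 2 := by positivity
  rw [div_pow, div_le_div_iff₀ (by positivity) hp', sq (‖p‖ ^ 2), ← mul_assoc]
  gcongr
  rw [← mul_pow, ← sq_abs]
  gcongr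
  exact abs_real_inner_le_norm d p

lemma norm_sub_smul_sq_div_sq_norm (d p : E) (hp : p ≠ 0) (t : ℝ) :
    ‖d - t • p‖ ^ 2 / ‖p‖ ^ 2 =
      (inner ℝ d p / ‖p‖ ^ 2 - t) ^ 2 + (‖d‖ ^ 2 / ‖p‖ ^ 2 - (inner ℝ d p / ‖p‖ ^ 2) ^ 2) := by
  have hp' : ‖p‖ ≠ 0 := norm_ne_zero_iff.mpr hp
  rw [norm_sub_sq_real, real_inner_smul_right, norm_smul, Real.norm_eq_abs, mul_pow, sq_abs]
  field_simp
  ring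

theorem norm_ofReal_add_sqrt_mul_I_sub_ofReal (d p : E) (hp : p ≠ 0) (t : ℝ) :
    ‖((inner ℝ d p / ‖p‖ ^ 2 : ℝ) : ℂ) +
        ((√(‖d‖ ^ 2 / ‖p‖ ^ 2 - (inner ℝ d p / ‖p‖ ^ 2) ^ 2) : ℝ) : ℂ) * I - t‖ =
      ‖d - t • p‖ / ‖p‖ := by
  set wr := inner ℝ d p / ‖p‖ ^ 2
  have hwi : 0 ≤ ‖d‖ ^ 2 / ‖p‖ ^ 2 - wr ^ 2 := sub_nonneg.mpr (sq_real_inner_div_sq_norm_le d p)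
  rw [add_sub_right_comm, ← ofReal_sub, norm_add_mul_I, Real.sq_sqrt hwi,
    ← norm_sub_smul_sq_div_sq_norm d p hp, Real.sqrt_div' _ (sq_nonneg _),
    Real.sqrt_sq (norm_nonneg _), Real.sqrt_sq (norm_nonneg _)]

end InnerProductSpace

/-- with `w = w_r + i·w_i` as in the construction of the holomorphic
extension of the Euclidean norm, one has `|w − t| = ‖d − tp‖ / ‖p‖` for all real `t`. -/
theorem stmt1 (n : ℕ) (d p : Fin n → ℝ) (hp : p ≠ 0)
    (wr : ℝ) (hwr : wr = (∑ j, d j * p j) / (euclNorm p) ^ 2)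
    (wi : ℝ) (hwi : wi = Real.sqrt ((euclNorm d) ^ 2 / (euclNorm p) ^ 2 - wr ^ 2))
    (w : ℂ) (hw : w = (wr : ℂ) + (wi : ℂ) * Complex.I) :
    ∀ t : ℝ, ‖w - (t : ℂ)‖ = euclNorm (d - t • p) / euclNorm p := by
  intro t
  simp only [euclNorm_eq_norm_toLp, sum_mul_eq_inner_toLp] at hwr hwi ⊢
  subst hw hwi hwr
  rw [WithLp.toLp_sub, WithLp.toLp_smul]
  exact norm_ofReal_add_sqrt_mul_I_sub_ofReal _ _ (by simpa using hp) t
end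

section
/- Let r > 0 and set ρ := √(r²+1) + r. Then the closure of the Bernstein elliptic disc D_ρ is contained in U_r. -/
/-!
`D_ρ` is the open ellipse with semi-axes `s = √(r² + 1)` and `r`, so its closure lies in the closed
ellipse. A point `z = x + iy` of it lies within `r` of `t = x / s ∈ [-1, 1]`, because
`|z - t|² = t² (s - 1)² + y² ≤ t² r² + r² (1 - t²) = r²`, using `s - 1 ≤ r`.
-/

open Complex Set

/-- The Bernstein elliptic disc `D_ρ`. -/
def bernDisc (ρ : ℝ) : Set ℂ :=
  {z : ℂ | (2 * z.re / (ρ + 1 / ρ)) ^ 2 + (2 * z.im / (ρ - 1 / ρ)) ^ 2 < 1}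

/-- The closed `r`-neighborhood `U_r` of the interval `[−1,1]` in `ℂ`. -/
def UrSet (r : ℝ) : Set ℂ :=
  {z : ℂ | ∃ t ∈ Set.Icc (-1 : ℝ) 1, ‖z - (t : ℂ)‖ ≤ r}

def closedEllipse (a b : ℝ) : Set ℂ :=
  {z : ℂ | (z.re / a) ^ 2 + (z.im / b) ^ 2 ≤ 1}

lemma isClosed_closedEllipse (a b : ℝ) : IsClosed (closedEllipse a b) :=
  isClosed_le (by fun_prop) continuous_const

lemma closure_bernDisc_subset_closedEllipse (ρ : ℝ) :
    closure (bernDisc ρ) ⊆ closedEllipse ((ρ + 1 / ρ) / 2) ((ρ - 1 / ρ) / 2) := by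
  refine closure_minimal (fun z hz => ?_) (isClosed_closedEllipse _ _)
  have hz : (2 * z.re / (ρ + 1 / ρ)) ^ 2 + (2 * z.im / (ρ - 1 / ρ)) ^ 2 < 1 := hz
  simp only [closedEllipse, mem_ofPred_eq, div_div_eq_mul_div, mul_comm _ (2 : ℝ)]
  exact hz.le

lemma closedEllipse_subset_UrSet {a b : ℝ} (ha : a ≠ 0) (hb : 0 < b)
    (hab : (a - 1) ^ 2 ≤ b ^ 2) : closedEllipse a b ⊆ UrSet b := by
  intro z (hz : (z.re / a) ^ 2 + (z.im / b) ^ 2 ≤ 1)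
  set t := z.re / a
  have hre : z.re = a * t := by simp only [t]; field_simp
  have him : z.im ^ 2 = b ^ 2 * (z.im / b) ^ 2 := by field_simp
  have ht : t ^ 2 ≤ 1 := by nlinarith [sq_nonneg (z.im / b)]
  refine ⟨t, abs_le.mp (sq_le_one_iff_abs_le_one t |>.mp ht), ?_⟩
  rw [← sq_le_sq₀ (norm_nonneg _) hb.le, Complex.sq_norm, Complex.normSq_apply]
  simp only [sub_re, ofReal_re, sub_im, ofReal_im, sub_zero, ← sq, hre, him]
  nlinarith [mul_le_mul_of_nonneg_left hab (sq_nonneg t)]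

lemma bernstein_semiaxes {r ρ : ℝ} (hρ : ρ = Real.sqrt (r ^ 2 + 1) + r) :
    (ρ + 1 / ρ) / 2 = Real.sqrt (r ^ 2 + 1) ∧ (ρ - 1 / ρ) / 2 = r := by
  have hs : Real.sqrt (r ^ 2 + 1) ^ 2 = r ^ 2 + 1 := Real.sq_sqrt (by positivity)
  have hsr : |r| < Real.sqrt (r ^ 2 + 1) := by
    rw [← Real.sqrt_sq_eq_abs]; exact Real.sqrt_lt_sqrt (sq_nonneg r) (lt_add_one _)
  have hρpos : 0 < ρ := by rw [hρ]; linarith [neg_abs_le r]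
  have hinv : 1 / ρ = Real.sqrt (r ^ 2 + 1) - r := by
    rw [div_eq_iff hρpos.ne', hρ]; nlinarith
  constructor <;> rw [hinv, hρ] <;> ring

/-- inclusion: for `r > 0` and `ρ := √(r²+1) + r`, the closure of the
Bernstein elliptic disc `D_ρ` is contained in `U_r`. -/
theorem stmt7 (r : ℝ) (hr : 0 < r) (ρ : ℝ) (hρ : ρ = Real.sqrt (r ^ 2 + 1) + r) :
    closure (bernDisc ρ) ⊆ UrSet r := by
  obtain ⟨hsemimajor, hsemiminor⟩ := bernstein_semiaxes hρ
  have hs : 1 ≤ Real.sqrt (r ^ 2 + 1) := Real.one_le_sqrt.mpr (by nlinarith)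
  refine (closure_bernDisc_subset_closedEllipse ρ).trans ?_
  rw [hsemimajor, hsemiminor]
  refine closedEllipse_subset_UrSet (by positivity) hr ?_
  have : Real.sqrt (r ^ 2 + 1) ≤ r + 1 := Real.sqrt_le_iff.mpr ⟨by linarith, by nlinarith⟩
  nlinarith
end

section
/- Let −1 ≤ a < b ≤ 1, h := (b−a)/2, and fix ε ∈ (0,1). Then there exists ρ₀ > 1, depending only on ε, such that for all ρ ≥ ρ₀ one has (1−ε)ρ/h > 1 and Φ_{[a,b]}(D_{(1−ε)ρ/h}) ⊆ D_ρ. -/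
/-!
`Φ_{[a,b]}(D_α)` is the ellipse centred at `c = (a+b)/2` with axes `h(α ± 1/α)`, and for
`α = (1-ε)ρ/h` these are `(1-ε)ρ ± h²/((1-ε)ρ)`. Once `ε(1-ε)ρ ≥ 4`, both axes are at most
`λ = 1 - ε/2` times the axes `ρ ± 1/ρ` of `D_ρ`, and the margin `(1-λ)(ρ+1/ρ) ≥ ερ/2 ≥ 2`
absorbs the shift `2|c| ≤ 2`. An ellipse shrunk by `λ` and shifted along its major axis by at most
`1 - λ` times that axis stays inside, by the triangle inequality for the norm of the ellipse.
-/

open Complex Set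

-- `A` and `B` are the full axis lengths, not the semi-axes.
def ellipseDisc (A B : ℝ) : Set ℂ :=
  {z : ℂ | (2 * z.re / A) ^ 2 + (2 * z.im / B) ^ 2 < 1}

theorem bernDisc_eq_ellipseDisc (ρ : ℝ) : bernDisc ρ = ellipseDisc (ρ + 1 / ρ) (ρ - 1 / ρ) := rfl

-- Minkowski in the unit disc: `|(w, 0) + (u, v)| ≤ |w| + |(u, v)| < (1 - l) + l`.
theorem sq_add_sq_lt_one_of_abs_le {l w u v : ℝ} (hl : 0 ≤ l) (hw : |w| ≤ 1 - l)
    (huv : u ^ 2 + v ^ 2 < l ^ 2) : (w + u) ^ 2 + v ^ 2 < 1 := by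
  have hu : |u| ≤ l := abs_le_of_sq_le_sq (by nlinarith [sq_nonneg v]) hl
  have hwu : (w + u) ^ 2 ≤ (|w| + |u|) ^ 2 :=
    sq_le_sq.2 ((abs_add_le w u).trans (le_abs_self _))
  nlinarith [sq_abs w, sq_abs u, abs_nonneg w, abs_nonneg u,
    mul_le_mul hw hu (abs_nonneg u) (by linarith [abs_nonneg w])]

namespace ellipseDisc

theorem ofReal_mul_mem {h A B : ℝ} {z : ℂ} (hh : h ≠ 0) (hz : z ∈ ellipseDisc A B) :
    (h : ℂ) * z ∈ ellipseDisc (h * A) (h * B) := by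
  simp only [ellipseDisc, mem_ofPred_eq, re_ofReal_mul, im_ofReal_mul] at hz ⊢
  rwa [mul_left_comm, mul_div_mul_left _ _ hh, mul_left_comm, mul_div_mul_left _ _ hh]

theorem mono {A B A' B' : ℝ} (hA : 0 < A) (hB : 0 < B) (hAA' : A ≤ A') (hBB' : B ≤ B') :
    ellipseDisc A B ⊆ ellipseDisc A' B' := by
  intro z hz
  simp only [ellipseDisc, mem_ofPred_eq, div_pow] at hz ⊢
  have hre : (2 * z.re) ^ 2 / A' ^ 2 ≤ (2 * z.re) ^ 2 / A ^ 2 := by gcongr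
  have him : (2 * z.im) ^ 2 / B' ^ 2 ≤ (2 * z.im) ^ 2 / B ^ 2 := by gcongr
  linarith

theorem ofReal_add_mem {l c P Q : ℝ} {z : ℂ} (hl0 : 0 < l) (hP : 0 < P)
    (hc : 2 * |c| ≤ (1 - l) * P) (hz : z ∈ ellipseDisc (l * P) (l * Q)) :
    (c : ℂ) + z ∈ ellipseDisc P Q := by
  simp only [ellipseDisc, mem_ofPred_eq, add_re, add_im, ofReal_re, ofReal_im, zero_add] at hz ⊢
  have hw : |2 * c / P| ≤ 1 - l := by
    rw [abs_div, abs_mul, abs_two, abs_of_pos hP, div_le_iff₀ hP]; exact hc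
  have huv : (2 * z.re / P) ^ 2 + (2 * z.im / Q) ^ 2 < l ^ 2 := by
    have hscale : ∀ x R : ℝ, 2 * x / (l * R) = 2 * x / R / l := fun x R => by
      rw [mul_comm l, div_div]
    rwa [hscale, hscale, div_pow (2 * z.re / P), div_pow (2 * z.im / Q), ← add_div,
      div_lt_one (pow_pos hl0 2)] at hz
  rw [mul_add, add_div]
  exact sq_add_sq_lt_one_of_abs_le hl0.le hw huv

end ellipseDisc

theorem one_div_lt_self {x : ℝ} (hx : 1 < x) : 1 / x < x :=
  (div_lt_one (by linarith)).2 hx |>.trans hx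

theorem image_bernDisc_subset_bernDisc {c h α ρ l : ℝ} (hh : 0 < h) (hα : 1 < α) (hρ : 0 < ρ)
    (hl : 0 < l) (hre : h * (α + 1 / α) ≤ l * (ρ + 1 / ρ))
    (him : h * (α - 1 / α) ≤ l * (ρ - 1 / ρ)) (hc : 2 * |c| ≤ (1 - l) * (ρ + 1 / ρ)) :
    (fun z : ℂ => (c : ℂ) + (h : ℂ) * z) '' bernDisc α ⊆ bernDisc ρ := by
  rintro _ ⟨z, hz, rfl⟩
  rw [bernDisc_eq_ellipseDisc] at hz ⊢
  have hα0 : 0 < α := by linarith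
  have hαinv := one_div_lt_self hα
  have hscaled := ellipseDisc.ofReal_mul_mem hh.ne' hz
  exact ellipseDisc.ofReal_add_mem hl (by positivity) hc <|
    ellipseDisc.mono (by positivity) (mul_pos hh (by linarith)) hre him hscaled

section Axes

variable {h X : ℝ}

theorem mul_add_one_div_div_le (hh0 : 0 < h) (hh1 : h ≤ 1) (hX : 0 < X) :
    h * (X / h + 1 / (X / h)) ≤ X + 1 / X := by
  have hsq : h * (1 / (X / h)) = h ^ 2 / X := by field_simp
  rw [mul_add, mul_div_cancel₀ _ hh0.ne', hsq]
  gcongr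
  nlinarith

theorem mul_sub_one_div_div_le (hh0 : 0 < h) (hX : 0 < X) :
    h * (X / h - 1 / (X / h)) ≤ X := by
  rw [mul_sub, mul_div_cancel₀ _ hh0.ne', sub_le_self_iff]
  positivity

end Axes

section LargeRho

variable {ε ρ : ℝ}

theorem add_one_div_le_of_large (hε1 : ε < 1) (hρ1 : 1 ≤ ρ) (hερ : 4 ≤ ε * (1 - ε) * ρ) :
    (1 - ε) * ρ + 1 / ((1 - ε) * ρ) ≤ (1 - ε / 2) * (ρ + 1 / ρ) := by
  have hX : 0 < (1 - ε) * ρ := by nlinarith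
  have hinv : 1 / ((1 - ε) * ρ) ≤ ε / 2 * ρ := by
    rw [div_le_iff₀ hX]; nlinarith
  have hρinv : 0 ≤ (1 - ε / 2) * (1 / ρ) := by
    have : 0 < ρ := by linarith
    have : 0 < 1 - ε / 2 := by linarith
    positivity
  linarith

theorem le_sub_one_div_of_large (hε0 : 0 < ε) (hρ1 : 1 ≤ ρ) (hερ : 4 ≤ ε * ρ) :
    (1 - ε) * ρ ≤ (1 - ε / 2) * (ρ - 1 / ρ) := by
  have hρinv : (1 - ε / 2) * (1 / ρ) ≤ ε / 2 * ρ := by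
    rw [mul_one_div, div_le_iff₀ (by linarith)]; nlinarith
  linarith

theorem two_le_of_large (hε0 : 0 < ε) (hρ1 : 1 ≤ ρ) (hερ : 4 ≤ ε * ρ) :
    2 ≤ (1 - (1 - ε / 2)) * (ρ + 1 / ρ) := by
  have : 0 ≤ ε / 2 * (1 / ρ) := by
    have : 0 < ρ := by linarith
    positivity
  nlinarith

end LargeRho

/-- inclusion of transformed Bernstein discs: for fixed `ε ∈ (0,1)` there
is `ρ₀ > 1`, depending only on `ε`, such that for all `−1 ≤ a < b ≤ 1` with
`h = (b−a)/2` and all `ρ ≥ ρ₀` one has `(1−ε)ρ/h > 1` and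
`Φ_{[a,b]}(D_{(1−ε)ρ/h}) ⊆ D_ρ`. -/
theorem stmt13 (ε : ℝ) (hε0 : 0 < ε) (hε1 : ε < 1) :
    ∃ ρ₀ : ℝ, 1 < ρ₀ ∧
      ∀ a b : ℝ, -1 ≤ a → a < b → b ≤ 1 →
        ∀ ρ : ℝ, ρ₀ ≤ ρ →
          1 < (1 - ε) * ρ / ((b - a) / 2) ∧
          (fun z : ℂ => (((b + a) / 2 : ℝ) : ℂ) + (((b - a) / 2 : ℝ) : ℂ) * z) ''
              bernDisc ((1 - ε) * ρ / ((b - a) / 2)) ⊆ bernDisc ρ := by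
  have hd : 0 < ε * (1 - ε) := mul_pos hε0 (by linarith)
  have hρ₀ : 1 < 4 / (ε * (1 - ε)) := by
    rw [one_lt_div hd]; nlinarith
  refine ⟨4 / (ε * (1 - ε)), hρ₀, fun a b ha hab hb ρ hρ => ?_⟩
  have hρ1 : 1 ≤ ρ := by linarith
  have hερ : 4 ≤ ε * (1 - ε) * ρ := (div_le_iff₀' hd).1 hρ
  have hερ' : 4 ≤ ε * ρ := by nlinarith
  have hh0 : 0 < (b - a) / 2 := by linarith
  have hh1 : (b - a) / 2 ≤ 1 := by linarith
  have hc : 2 * |(b + a) / 2| ≤ 2 := by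
    have : |(b + a) / 2| ≤ 1 := abs_le.2 ⟨by linarith, by linarith⟩
    linarith
  have hα : 1 < (1 - ε) * ρ / ((b - a) / 2) := by
    rw [one_lt_div hh0]; nlinarith
  refine ⟨hα, image_bernDisc_subset_bernDisc hh0 hα (by linarith) (by linarith : 0 < 1 - ε / 2)
    ?_ ?_ (hc.trans (two_le_of_large hε0 hρ1 hερ'))⟩
  · exact (mul_add_one_div_div_le hh0 hh1 (by nlinarith)).trans
      (add_one_div_le_of_large hε1 hρ1 hερ)
  · exact (mul_sub_one_div_div_le hh0 (by nlinarith)).trans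
      (le_sub_one_div_of_large hε0 hρ1 hερ')
end

section
/- Fix q̄ ∈ (0,1), q ∈ (q̄,1), q̂ ∈ (q,1), γ ≥ 0, C_Λ > 0 and λ ≥ 1, and assume Λ_m ≤ C_Λ(m+1)^λ for all m ∈ ℕ. Then there exists K > 0, depending only on γ, q̄, q, q̂, C_Λ, and λ, such that for all L ≥ 1 and all m ∈ ℕ with m ≥ K(1 + log L): ε_{m,L} := (1 + (1+Λ_m)q^m)^L − 1 ≤ q̂^m. -/
/-!
Since `(1 + x)^L ≤ exp (L x)` and `exp t - 1 ≤ 2 t` for `0 ≤ t ≤ 1`, it suffices to show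
`2 L (1 + Λ_m) q^m ≤ q̂^m`, i.e. `L · 4 C_Λ (m+1)^λ ≤ (q̂/q)^m`. Half of the exponential rate
`log (q̂/q)` dominates the polynomial factor, and the other half absorbs `L` as soon as
`m ≥ K (1 + log L)`.
-/

open Real Filter Asymptotics

theorem one_add_pow_sub_one_le {x : ℝ} (hx : -1 ≤ x) {L : ℕ} (h : |L * x| ≤ 1) :
    (1 + x) ^ L - 1 ≤ 2 * |L * x| := by
  have hpow : (1 + x) ^ L ≤ exp (L * x) := by
    rw [exp_nat_mul]
    exact pow_le_pow_left₀ (by linarith) (by linarith [add_one_le_exp x]) L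
  linarith [le_abs_self (exp (L * x) - 1), abs_exp_sub_one_le h]

theorem exists_mul_rpow_add_one_le_mul_exp (C a : ℝ) {b : ℝ} (hb : 0 < b) :
    ∃ D > 0, ∀ m : ℕ, C * ((m : ℝ) + 1) ^ a ≤ D * exp (m * b) := by
  have hO : (fun m : ℕ => ((m : ℝ) + 1) ^ a) =O[atTop]
      fun m : ℕ => exp (b * ((m : ℝ) + 1)) :=
    ((isLittleO_rpow_exp_pos_mul_atTop a hb).isBigO.comp_tendsto
      (tendsto_atTop_add_const_right _ 1 tendsto_id)).natCast_atTop
  obtain ⟨D, hD⟩ := (isBigO_nat_atTop_iff fun m h => absurd h (exp_pos _).ne').1 hO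
  refine ⟨|C| * |D| * exp b + 1, by positivity, fun m => ?_⟩
  have hm := hD m
  rw [Real.norm_of_nonneg (by positivity), Real.norm_of_nonneg (exp_pos _).le,
    mul_add, mul_one, exp_add, mul_comm b] at hm
  calc C * ((m : ℝ) + 1) ^ a ≤ |C| * ((m : ℝ) + 1) ^ a := by
        gcongr; exact le_abs_self C
    _ ≤ |C| * (|D| * (exp (m * b) * exp b)) := by
        gcongr
        exact hm.trans (mul_le_mul_of_nonneg_right (le_abs_self D) (by positivity))
    _ ≤ (|C| * |D| * exp b + 1) * exp (m * b) := by nlinarith [exp_pos (m * b)]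

theorem exists_log_threshold_mul_rpow_le_exp (C a : ℝ) {b : ℝ} (hb : 0 < b) :
    ∃ K > 0, ∀ L : ℕ, 1 ≤ L → ∀ m : ℕ, K * (1 + log L) ≤ m →
      L * (C * ((m : ℝ) + 1) ^ a) ≤ exp (m * b) := by
  obtain ⟨D, hD0, hD⟩ := exists_mul_rpow_add_one_le_mul_exp C a (half_pos hb)
  set M := max 1 (log D)
  refine ⟨2 * M / b, by positivity, fun L hL m hm => ?_⟩
  have hL0 : (0 : ℝ) < L := by exact_mod_cast hL
  have hlogL : 0 ≤ log L := log_nonneg (by exact_mod_cast hL)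
  have hlog : log L + log D ≤ m * (b / 2) := by
    have hMm : M * (1 + log L) ≤ m * (b / 2) := by
      have := mul_le_mul_of_nonneg_left hm (half_pos hb).le
      rwa [← mul_assoc, show b / 2 * (2 * M / b) = M by field_simp, mul_comm (b / 2)] at this
    nlinarith [le_max_left 1 (log D), le_max_right 1 (log D)]
  calc (L : ℝ) * (C * ((m : ℝ) + 1) ^ a) ≤ L * (D * exp (m * (b / 2))) :=
        mul_le_mul_of_nonneg_left (hD m) hL0.le
    _ = exp (log L + log D) * exp (m * (b / 2)) := by
        rw [exp_add, exp_log hL0, exp_log hD0, mul_assoc]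
    _ ≤ exp (m * (b / 2)) * exp (m * (b / 2)) := by gcongr
    _ = exp (m * b) := by rw [← exp_add]; ring_nf

theorem stmt17_general (qbar q qhat CΛ lam : ℝ)
    (hqbar : 0 < qbar)
    (hq1 : qbar < q)
    (hqhat1 : q < qhat) (hqhat2 : qhat < 1)
    (Λ : ℕ → ℝ) (hΛ1 : ∀ m, 1 ≤ Λ m)
    (hΛ : ∀ m : ℕ, Λ m ≤ CΛ * ((m : ℝ) + 1) ^ lam) :
    ∃ K : ℝ, 0 < K ∧
      ∀ L : ℕ, 1 ≤ L →
        ∀ m : ℕ, K * (1 + Real.log L) ≤ (m : ℝ) →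
          (1 + (1 + Λ m) * q ^ m) ^ L - 1 ≤ qhat ^ m := by
  have hq0 : 0 < q := hqbar.trans hq1
  have hratio : 1 < qhat / q := (one_lt_div hq0).2 hqhat1
  obtain ⟨K, hK0, hK⟩ :=
    exists_log_threshold_mul_rpow_le_exp (4 * CΛ) lam (log_pos hratio)
  refine ⟨K, hK0, fun L hL m hm => ?_⟩
  set x := (1 + Λ m) * q ^ m
  have hx0 : 0 ≤ x := mul_nonneg (by linarith [hΛ1 m]) (by positivity)
  have htail : 2 * (L * x) ≤ qhat ^ m :=
    calc 2 * (L * x) = L * (2 * (1 + Λ m)) * q ^ m := by ring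
      _ ≤ L * (4 * CΛ * ((m : ℝ) + 1) ^ lam) * q ^ m := by
          gcongr (L : ℝ) * ?_ * _; linarith [hΛ m, hΛ1 m]
      _ ≤ exp (m * log (qhat / q)) * q ^ m := by gcongr; exact hK L hL m hm
      _ = qhat ^ m := by
          rw [exp_nat_mul, exp_log (by positivity), ← mul_pow, div_mul_cancel₀ _ hq0.ne']
  have hqhat_pow : qhat ^ m ≤ 1 := pow_le_one₀ (hq0.trans hqhat1).le hqhat2.le
  have hLx : |L * x| = L * x := abs_of_nonneg (by positivity)
  have hε := one_add_pow_sub_one_le (x := x) (L := L) (by linarith) (by rw [hLx]; linarith)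
  rw [hLx] at hε
  linarith

/-- under the stability assumption `1 ≤ Λ_m ≤ C_Λ(m+1)^λ` there is
`K > 0`, depending only on `γ, q̄, q, q̂, C_Λ, λ`, such that for all `L ≥ 1` and all
`m ≥ K(1 + log L)` one has `ε_{m,L} = (1+(1+Λ_m)q^m)^L − 1 ≤ q̂^m`. -/
theorem stmt17 (qbar q qhat γ CΛ lam : ℝ)
    (hqbar : 0 < qbar) (hqbar1 : qbar < 1)
    (hq1 : qbar < q) (hq2 : q < 1)
    (hqhat1 : q < qhat) (hqhat2 : qhat < 1)
    (hγ : 0 ≤ γ) (hCΛ : 0 < CΛ) (hlam : 1 ≤ lam)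
    (Λ : ℕ → ℝ) (hΛ1 : ∀ m, 1 ≤ Λ m)
    (hΛ : ∀ m : ℕ, Λ m ≤ CΛ * ((m : ℝ) + 1) ^ lam) :
    ∃ K : ℝ, 0 < K ∧
      ∀ L : ℕ, 1 ≤ L →
        ∀ m : ℕ, K * (1 + Real.log L) ≤ (m : ℝ) →
          (1 + (1 + Λ m) * q ^ m) ^ L - 1 ≤ qhat ^ m :=
  stmt17_general qbar q qhat CΛ lam hqbar hq1 hqhat1 hqhat2 Λ hΛ1 hΛ
end
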